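/- (Derivatives of the spatial Godunov–Boillat potential with respect to σ̃ and q̃.) At every state Υ with θ̃ < 0: the partial derivative of X¹ with respect to σ̃ equals τ₂·p̂_ψ(θ, ψ(Υ))·σ̃·ũ₁ + θũ₁, and the gradient of X¹ with respect to q̃ ∈ ℝ³ is given componentwise, for k = 1, 2, 3, by ∂X¹/∂q̃_k = τ₀·p̂_ψ(θ, ψ(Υ))·ũ₁·q̃_k + θ·δ_{1k}. -/

import Mathlib

noncomputable section

/-- The extended thermodynamical potential
`ψ(Υ) = ψ̃ + ½θ|ũ|² + ½τ₁‖Σ̃‖² + ½τ₂σ̃² + ½τ₀|q̃|²` with `θ = -1/θ̃`. -/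
def psiVal (τ0 τ1 τ2 : ℝ) (ψt : ℝ) (ut : Fin 3 → ℝ) (θt : ℝ)
    (St : Matrix (Fin 3) (Fin 3) ℝ) (σt : ℝ) (qt : Fin 3 → ℝ) : ℝ :=
  ψt + (1/2) * (-1/θt) * (∑ i, (ut i)^2) + (1/2) * τ1 * (∑ j, ∑ k, (St j k)^2)
    + (1/2) * τ2 * σt^2 + (1/2) * τ0 * (∑ i, (qt i)^2)

/-- The temporal Godunov–Boillat potential `X⁰(Υ) = p̂(θ, ψ(Υ))/θ`, `θ = -1/θ̃`. -/
def X0 (phat : ℝ × ℝ → ℝ) (τ0 τ1 τ2 : ℝ) (ψt : ℝ) (ut : Fin 3 → ℝ) (θt : ℝ)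
    (St : Matrix (Fin 3) (Fin 3) ℝ) (σt : ℝ) (qt : Fin 3 → ℝ) : ℝ :=
  phat (-1/θt, psiVal τ0 τ1 τ2 ψt ut θt St σt qt) / (-1/θt)

/-- The spatial Godunov–Boillat potential
`X¹(Υ) = p̂(θ, ψ(Υ)) ũ₁ + θ((Σ̃ũ)₁ + σ̃ũ₁ + q̃₁)`, `θ = -1/θ̃`. -/
def X1 (phat : ℝ × ℝ → ℝ) (τ0 τ1 τ2 : ℝ) (ψt : ℝ) (ut : Fin 3 → ℝ) (θt : ℝ)
    (St : Matrix (Fin 3) (Fin 3) ℝ) (σt : ℝ) (qt : Fin 3 → ℝ) : ℝ :=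
  phat (-1/θt, psiVal τ0 τ1 τ2 ψt ut θt St σt qt) * ut 0
    + (-1/θt) * ((∑ j, St 0 j * ut j) + σt * ut 0 + qt 0)

/-- Partial derivative `p̂_ψ` of `p̂` with respect to its second slot. -/
def pPsi (phat : ℝ × ℝ → ℝ) (a b : ℝ) : ℝ := deriv (fun s => phat (a, s)) b

/-- Partial derivative `p̂_θ` of `p̂` with respect to its first slot. -/
def pTheta (phat : ℝ × ℝ → ℝ) (a b : ℝ) : ℝ := deriv (fun t => phat (t, b)) a

/-! `X¹` depends on `σ̃` and `q̃` only through `ψ(Υ)`, which is quadratic in them, and through the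
linear flux term `θ (σ̃ ũ₁ + q̃₁)`. Both claims are therefore instances of a single chain rule
for `X¹` along an arbitrary differentiable curve `s ↦ (σ̃(s), q̃(s))`, taken along the `σ̃`-axis
and along the `q̃_k`-axis. -/

lemma hasDerivAt_pPsi {phat : ℝ × ℝ → ℝ} {a b : ℝ} (h : DifferentiableAt ℝ phat (a, b)) :
    HasDerivAt (fun s => phat (a, s)) (pPsi phat a b) b :=
  (h.comp b ((differentiableAt_const a).prodMk differentiableAt_id)).hasDerivAt

lemma HasDerivAt.sum_sq {ι : Type*} [Fintype ι] {q : ℝ → ι → ℝ} {q' : ι → ℝ} {x : ℝ}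
    (hq : HasDerivAt q q' x) :
    HasDerivAt (fun s => ∑ i, q s i ^ 2) (2 * ∑ i, q x i * q' i) x := by
  rw [Finset.mul_sum]
  exact HasDerivAt.fun_sum fun i _ =>
    ((hasDerivAt_pi.1 hq i).fun_pow 2).congr_deriv (by norm_num; ring)

section Potentials

variable {phat : ℝ × ℝ → ℝ} {τ0 τ1 τ2 ψt θt : ℝ} {ut : Fin 3 → ℝ}
  {St : Matrix (Fin 3) (Fin 3) ℝ} {σ : ℝ → ℝ} {q : ℝ → Fin 3 → ℝ} {σ' x : ℝ} {q' : Fin 3 → ℝ}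

lemma hasDerivAt_psiVal (hσ : HasDerivAt σ σ' x) (hq : HasDerivAt q q' x) :
    HasDerivAt (fun s => psiVal τ0 τ1 τ2 ψt ut θt St (σ s) (q s))
      (τ2 * σ x * σ' + τ0 * ∑ i, q x i * q' i) x := by
  have hσ2 := (hσ.fun_pow 2).const_mul ((1/2) * τ2)
  have hq2 := hq.sum_sq.const_mul ((1/2) * τ0)
  exact ((hσ2.const_add (ψt + (1/2) * (-1/θt) * (∑ i, ut i ^ 2)
    + (1/2) * τ1 * ∑ j, ∑ k, St j k ^ 2)).fun_add hq2).congr_deriv (by norm_num; ring)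

lemma hasDerivAt_X1
    (hp : DifferentiableAt ℝ phat (-1/θt, psiVal τ0 τ1 τ2 ψt ut θt St (σ x) (q x)))
    (hσ : HasDerivAt σ σ' x) (hq : HasDerivAt q q' x) :
    HasDerivAt (fun s => X1 phat τ0 τ1 τ2 ψt ut θt St (σ s) (q s))
      (pPsi phat (-1/θt) (psiVal τ0 τ1 τ2 ψt ut θt St (σ x) (q x))
          * (τ2 * σ x * σ' + τ0 * ∑ i, q x i * q' i) * ut 0
        + (-1/θt) * (σ' * ut 0 + q' 0)) x := by
  have hpressure := (hasDerivAt_pPsi hp).comp x (hasDerivAt_psiVal hσ hq)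
  have hflux := (((hσ.mul_const (ut 0)).const_add (∑ j, St 0 j * ut j)).add
    (hasDerivAt_pi.1 hq 0)).const_mul (-1/θt)
  exact (hpressure.mul_const (ut 0)).add hflux

end Potentials

theorem X1_deriv_sigma_q_general
    (phat : ℝ × ℝ → ℝ) (hp : ContDiff ℝ 2 phat)
    (τ0 τ1 τ2 : ℝ)
    (ψt : ℝ) (ut : Fin 3 → ℝ) (θt : ℝ) (St : Matrix (Fin 3) (Fin 3) ℝ)
    (σt : ℝ) (qt : Fin 3 → ℝ) :
    HasDerivAt (fun s => X1 phat τ0 τ1 τ2 ψt ut θt St s qt)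
      (τ2 * pPsi phat (-1/θt) (psiVal τ0 τ1 τ2 ψt ut θt St σt qt) * σt * ut 0
        + (-1/θt) * ut 0) σt
    ∧ (∀ k : Fin 3,
      HasDerivAt (fun s => X1 phat τ0 τ1 τ2 ψt ut θt St σt (Function.update qt k s))
        (τ0 * pPsi phat (-1/θt) (psiVal τ0 τ1 τ2 ψt ut θt St σt qt) * ut 0 * qt k
          + (-1/θt) * (if (0 : Fin 3) = k then 1 else 0)) (qt k)) := by
  have hdiff : Differentiable ℝ phat := hp.differentiable (by norm_num)
  constructor
  · exact (hasDerivAt_X1 (hdiff _) (hasDerivAt_id' σt) (hasDerivAt_const σt qt)).congr_deriv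
      (by simp only [Pi.zero_apply, mul_zero, Finset.sum_const_zero, add_zero]; ring)
  · intro k
    have hupdate := hasDerivAt_update qt k (qt k)
    refine (hasDerivAt_X1 (hdiff _) (hasDerivAt_const (qt k) σt) hupdate).congr_deriv ?_
    simp only [Function.update_eq_self, Pi.single_apply, mul_ite, mul_one, mul_zero,
      Finset.sum_ite_eq', Finset.mem_univ, if_true]
    split_ifs <;> ring

/-- Derivatives of the spatial Godunov–Boillat potential with respect to `σ̃`
and `q̃`, at every state with `θ̃ < 0`:
`∂X¹/∂σ̃ = τ₂ p̂_ψ σ̃ ũ₁ + θũ₁` and `∂X¹/∂q̃_k = τ₀ p̂_ψ ũ₁ q̃_k + θ δ_{1k}`. -/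
theorem X1_deriv_sigma_q
    (phat : ℝ × ℝ → ℝ) (hp : ContDiff ℝ 2 phat)
    (τ0 τ1 τ2 : ℝ) (hτ0 : 0 < τ0) (hτ1 : 0 < τ1) (hτ2 : 0 < τ2)
    (ψt : ℝ) (ut : Fin 3 → ℝ) (θt : ℝ) (St : Matrix (Fin 3) (Fin 3) ℝ)
    (σt : ℝ) (qt : Fin 3 → ℝ) (hθ : θt < 0) :
    HasDerivAt (fun s => X1 phat τ0 τ1 τ2 ψt ut θt St s qt)
      (τ2 * pPsi phat (-1/θt) (psiVal τ0 τ1 τ2 ψt ut θt St σt qt) * σt * ut 0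
        + (-1/θt) * ut 0) σt
    ∧ (∀ k : Fin 3,
      HasDerivAt (fun s => X1 phat τ0 τ1 τ2 ψt ut θt St σt (Function.update qt k s))
        (τ0 * pPsi phat (-1/θt) (psiVal τ0 τ1 τ2 ψt ut θt St σt qt) * ut 0 * qt k
          + (-1/θt) * (if (0 : Fin 3) = k then 1 else 0)) (qt k)) :=
  X1_deriv_sigma_q_general phat hp τ0 τ1 τ2 ψt ut θt St σt qt

end
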